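/- arXiv:1605.04555 — 2 statements merged into one kernel-verified Lean document; each statement's English description precedes it below -/
import Mathlib

section
/- The quasiderivation algebra QDer(N) of a multiplicative n-Hom Lie superalgebra N is a Hom-subalgebra of (Ω, [·,·], α̃): if D is a homogeneous α^k-quasiderivation of degree ξ and E a homogeneous α^s-quasiderivation of degree η, then α̃(D) = αD is an α^{k+1}-quasiderivation of degree ξ and [D,E] = DE − (−1)^{ξη}ED is an α^{k+s}-quasiderivation of degree ξ+η. -/
open scoped BigOperators

noncomputable section

variable {𝔽 : Type*} [Field 𝔽]
variable {N : Type*} [AddCommGroup N] [Module 𝔽 N]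

/-- The sign `(-1)^g` for `g : ZMod 2`. -/
def sgn (𝔽 : Type*) [Field 𝔽] (g : ZMod 2) : 𝔽 := if g = 0 then 1 else -1

/-- `|X_{i-1}|` : the sum of the degrees `d j` for `j < i`. -/
def psum {m : ℕ} (d : Fin m → ZMod 2) (i : Fin m) : ZMod 2 :=
  ∑ j ∈ Finset.univ.filter (fun j => j < i), d j

/-- `D` is homogeneous of degree `ξ` with respect to the `ℤ₂`-grading `gr`. -/
def Homog (gr : ZMod 2 → Submodule 𝔽 N) (ξ : ZMod 2) (D : N →ₗ[𝔽] N) : Prop :=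
  ∀ g : ZMod 2, ∀ x ∈ gr g, D x ∈ gr (g + ξ)

/-- `(N, br, α)` is a multiplicative `n`-Hom Lie superalgebra, where `n = m + 1`:
`N = N₀ ⊕ N₁` is `ℤ₂`-graded, the `n`-multilinear bracket `br` is even (adds degrees),
super skew-symmetric in adjacent arguments, `α` is even, multiplicative, and the super
Hom-Jacobi identity holds. -/
structure IsMNHLS {m : ℕ} (gr : ZMod 2 → Submodule 𝔽 N)
    (br : MultilinearMap 𝔽 (fun _ : Fin (m + 1) => N) N) (α : N →ₗ[𝔽] N) : Prop where
  internal : DirectSum.IsInternal gr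
  alpha_even : ∀ g : ZMod 2, ∀ x ∈ gr g, α x ∈ gr g
  br_deg : ∀ (d : Fin (m + 1) → ZMod 2) (x : Fin (m + 1) → N),
      (∀ i, x i ∈ gr (d i)) → br x ∈ gr (∑ i, d i)
  skew : ∀ (d : Fin (m + 1) → ZMod 2) (x : Fin (m + 1) → N),
      (∀ i, x i ∈ gr (d i)) → ∀ i j : Fin (m + 1), (i : ℕ) + 1 = (j : ℕ) →
      br x = -sgn 𝔽 (d i * d j) • br (x ∘ Equiv.swap i j)
  alpha_br : ∀ x : Fin (m + 1) → N, α (br x) = br fun i => α (x i)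
  jacobi : ∀ (dx : Fin m → ZMod 2) (x : Fin m → N)
      (dy : Fin (m + 1) → ZMod 2) (y : Fin (m + 1) → N),
      (∀ i, x i ∈ gr (dx i)) → (∀ i, y i ∈ gr (dy i)) →
      br (Fin.snoc (fun i => α (x i)) (br y)) =
        ∑ i : Fin (m + 1), sgn 𝔽 ((∑ j, dx j) * psum dy i) •
          br (Function.update (fun j => α (y j)) i (br (Fin.snoc x (y i))))

/-- `D` is a homogeneous `α^k`-derivation of degree `ξ`. -/
def IsDer {m : ℕ} (gr : ZMod 2 → Submodule 𝔽 N)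
    (br : MultilinearMap 𝔽 (fun _ : Fin (m + 1) => N) N) (α : N →ₗ[𝔽] N)
    (k : ℕ) (ξ : ZMod 2) (D : N →ₗ[𝔽] N) : Prop :=
  Homog gr ξ D ∧ D ∘ₗ α = α ∘ₗ D ∧
    ∀ (d : Fin (m + 1) → ZMod 2) (x : Fin (m + 1) → N), (∀ i, x i ∈ gr (d i)) →
      D (br x) = ∑ i : Fin (m + 1), sgn 𝔽 (ξ * psum d i) •
        br (Function.update (fun j => (α ^ k) (x j)) i (D (x i)))

/-- `D` is a homogeneous `α^k`-quasiderivation of degree `ξ` with associated map `D'`. -/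
def IsQDerWith {m : ℕ} (gr : ZMod 2 → Submodule 𝔽 N)
    (br : MultilinearMap 𝔽 (fun _ : Fin (m + 1) => N) N) (α : N →ₗ[𝔽] N)
    (k : ℕ) (ξ : ZMod 2) (D D' : N →ₗ[𝔽] N) : Prop :=
  Homog gr ξ D ∧ D ∘ₗ α = α ∘ₗ D ∧ Homog gr ξ D' ∧ D' ∘ₗ α = α ∘ₗ D' ∧
    ∀ (d : Fin (m + 1) → ZMod 2) (x : Fin (m + 1) → N), (∀ i, x i ∈ gr (d i)) →
      (∑ i : Fin (m + 1), sgn 𝔽 (ξ * psum d i) •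
        br (Function.update (fun j => (α ^ k) (x j)) i (D (x i)))) = D' (br x)

/-- `D` is a homogeneous `α^k`-quasiderivation of degree `ξ`. -/
def IsQDer {m : ℕ} (gr : ZMod 2 → Submodule 𝔽 N)
    (br : MultilinearMap 𝔽 (fun _ : Fin (m + 1) => N) N) (α : N →ₗ[𝔽] N)
    (k : ℕ) (ξ : ZMod 2) (D : N →ₗ[𝔽] N) : Prop :=
  ∃ D' : N →ₗ[𝔽] N, IsQDerWith gr br α k ξ D D'

/-- `D` is a homogeneous generalized `α^k`-derivation of degree `ξ`:
there are `D⁽¹⁾, …, D⁽ⁿ⁾` (here `DD i` for positions `i = 1, …, n-1`, with `DD 0 = D`,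
and `Dn = D⁽ⁿ⁾`) all homogeneous of degree `ξ` and commuting with `α`, satisfying the
defining identity. -/
def IsGDer {m : ℕ} (gr : ZMod 2 → Submodule 𝔽 N)
    (br : MultilinearMap 𝔽 (fun _ : Fin (m + 1) => N) N) (α : N →ₗ[𝔽] N)
    (k : ℕ) (ξ : ZMod 2) (D : N →ₗ[𝔽] N) : Prop :=
  Homog gr ξ D ∧ D ∘ₗ α = α ∘ₗ D ∧
    ∃ (DD : Fin (m + 1) → (N →ₗ[𝔽] N)) (Dn : N →ₗ[𝔽] N),
      DD 0 = D ∧ (∀ i, Homog gr ξ (DD i)) ∧ (∀ i, DD i ∘ₗ α = α ∘ₗ DD i) ∧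
      Homog gr ξ Dn ∧ Dn ∘ₗ α = α ∘ₗ Dn ∧
      ∀ (d : Fin (m + 1) → ZMod 2) (x : Fin (m + 1) → N), (∀ i, x i ∈ gr (d i)) →
        (∑ i : Fin (m + 1), sgn 𝔽 (ξ * psum d i) •
          br (Function.update (fun j => (α ^ k) (x j)) i (DD i (x i)))) = Dn (br x)

/-- `D` is a homogeneous `α^k`-centroid element of degree `ξ`. -/
def IsCent {m : ℕ} (gr : ZMod 2 → Submodule 𝔽 N)
    (br : MultilinearMap 𝔽 (fun _ : Fin (m + 1) => N) N) (α : N →ₗ[𝔽] N)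
    (k : ℕ) (ξ : ZMod 2) (D : N →ₗ[𝔽] N) : Prop :=
  Homog gr ξ D ∧ D ∘ₗ α = α ∘ₗ D ∧
    ∀ (d : Fin (m + 1) → ZMod 2) (x : Fin (m + 1) → N), (∀ i, x i ∈ gr (d i)) →
      (∀ i : Fin (m + 1),
        br (Function.update (fun j => (α ^ k) (x j)) 0 (D (x 0))) =
          sgn 𝔽 (ξ * psum d i) •
            br (Function.update (fun j => (α ^ k) (x j)) i (D (x i)))) ∧
      br (Function.update (fun j => (α ^ k) (x j)) 0 (D (x 0))) = D (br x)

/-- `D` is a homogeneous `α^k`-quasicentroid element of degree `ξ`. -/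
def IsQCent {m : ℕ} (gr : ZMod 2 → Submodule 𝔽 N)
    (br : MultilinearMap 𝔽 (fun _ : Fin (m + 1) => N) N) (α : N →ₗ[𝔽] N)
    (k : ℕ) (ξ : ZMod 2) (D : N →ₗ[𝔽] N) : Prop :=
  Homog gr ξ D ∧ D ∘ₗ α = α ∘ₗ D ∧
    ∀ (d : Fin (m + 1) → ZMod 2) (x : Fin (m + 1) → N), (∀ i, x i ∈ gr (d i)) →
      ∀ i : Fin (m + 1),
        br (Function.update (fun j => (α ^ k) (x j)) 0 (D (x 0))) =
          sgn 𝔽 (ξ * psum d i) •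
            br (Function.update (fun j => (α ^ k) (x j)) i (D (x i)))

/-- `D` is a homogeneous `α^k`-center derivation of degree `ξ`. -/
def IsZDer {m : ℕ} (gr : ZMod 2 → Submodule 𝔽 N)
    (br : MultilinearMap 𝔽 (fun _ : Fin (m + 1) => N) N) (α : N →ₗ[𝔽] N)
    (k : ℕ) (ξ : ZMod 2) (D : N →ₗ[𝔽] N) : Prop :=
  Homog gr ξ D ∧ D ∘ₗ α = α ∘ₗ D ∧
    ∀ (d : Fin (m + 1) → ZMod 2) (x : Fin (m + 1) → N), (∀ i, x i ∈ gr (d i)) →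
      br (Function.update (fun j => (α ^ k) (x j)) 0 (D (x 0))) = 0 ∧ D (br x) = 0

/-- The center `Z(N) = {x : [x, y₂, …, yₙ] = 0}`. -/
def center {m : ℕ} (br : MultilinearMap 𝔽 (fun _ : Fin (m + 1) => N) N) :
    Submodule 𝔽 N where
  carrier := {x | ∀ y : Fin (m + 1) → N, br (Function.update y 0 x) = 0}
  add_mem' := by
    intro a b ha hb y
    rw [MultilinearMap.map_update_add, ha y, hb y, add_zero]
  zero_mem' := by
    intro y
    exact br.map_update_zero y 0
  smul_mem' := by
    intro c a ha y
    rw [MultilinearMap.map_update_smul, ha y, smul_zero]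

/-- The Jordan product `D • E = ½(DE + (-1)^{|D||E|} ED)` of operators of degrees `ξ, η`. -/
def jprod (𝔽 : Type*) [Field 𝔽] {N : Type*} [AddCommGroup N] [Module 𝔽 N]
    (ξ η : ZMod 2) (D E : N →ₗ[𝔽] N) : N →ₗ[𝔽] N :=
  (2 : 𝔽)⁻¹ • (D ∘ₗ E + sgn 𝔽 (ξ * η) • (E ∘ₗ D))

/-- The Hom-associator of the Jordan product with respect to `α̃(u) = α ∘ u`, where
`x, y, z` have degrees `a, b, c`. -/
def jassoc (𝔽 : Type*) [Field 𝔽] {N : Type*} [AddCommGroup N] [Module 𝔽 N]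
    (α : N →ₗ[𝔽] N) (a b c : ZMod 2) (x y z : N →ₗ[𝔽] N) : N →ₗ[𝔽] N :=
  jprod 𝔽 (a + b) c (jprod 𝔽 a b x y) (α ∘ₗ z) -
    jprod 𝔽 a (b + c) (α ∘ₗ x) (jprod 𝔽 b c y z)

/-- The bracket subalgebra `[N, …, N]`, the span of all brackets. -/
def brSub {m : ℕ} (br : MultilinearMap 𝔽 (fun _ : Fin (m + 1) => N) N) :
    Submodule 𝔽 N :=
  Submodule.span 𝔽 (Set.range fun x : Fin (m + 1) → N => br x)

/-- The bracket of `Ň = Nt + Ntⁿ` (modelled as `N × N`, first coordinate the coefficient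
of `t`, second the coefficient of `tⁿ`): `[x₁t, …, xₙt] = [x₁, …, xₙ]tⁿ` and every bracket
involving a `tⁿ`-term vanishes. -/
def checkBr {m : ℕ} (br : MultilinearMap 𝔽 (fun _ : Fin (m + 1) => N) N) :
    MultilinearMap 𝔽 (fun _ : Fin (m + 1) => N × N) (N × N) :=
  (LinearMap.inr 𝔽 N N).compMultilinearMap
    (br.compLinearMap fun _ => LinearMap.fst 𝔽 N N)

/-- The grading of `Ň = Nt + Ntⁿ`. -/
def checkGr (gr : ZMod 2 → Submodule 𝔽 N) (g : ZMod 2) : Submodule 𝔽 (N × N) :=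
  (gr g).prod (gr g)

/-- The map `φ(D) : Ň → Ň`, `φ(D)(at + utⁿ + btⁿ) = D(a)t + D'(b)tⁿ`, where `π` is the
projection of `N` onto `[N, …, N]` along `U`. -/
def phiMap (D D' π : N →ₗ[𝔽] N) : N × N →ₗ[𝔽] N × N :=
  LinearMap.prodMap D (D' ∘ₗ π)

lemma sgn_add'' (𝔽 : Type*) [Field 𝔽] (a b : ZMod 2) :
    sgn 𝔽 (a + b) = sgn 𝔽 a * sgn 𝔽 b := by
  have h : ∀ g : ZMod 2, g = 0 ∨ g = 1 := by decide
  have h11 : (1 + 1 : ZMod 2) = 0 := by decide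
  rcases h a with ha | ha <;> rcases h b with hb | hb <;>
    simp [sgn, ha, hb, h11]

lemma sgn_sq (𝔽 : Type*) [Field 𝔽] (a : ZMod 2) : sgn 𝔽 a * sgn 𝔽 a = 1 := by
  have h : ∀ g : ZMod 2, g = 0 ∨ g = 1 := by decide
  rcases h a with ha | ha <;> simp [sgn, ha]

lemma psum_update' {m : ℕ} (d : Fin m → ZMod 2) (i : Fin m) (c : ZMod 2) (j : Fin m) :
    psum (Function.update d i c) j = psum d j + if i < j then c - d i else 0 := by
  have hfun : Function.update d i c = fun t => d t + if t = i then c - d i else 0 := by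
    funext t
    rcases eq_or_ne t i with h | h
    · subst h; rw [Function.update_self, if_pos rfl]; ring
    · rw [Function.update_of_ne h, if_neg h, add_zero]
  rw [hfun]
  unfold psum
  rw [Finset.sum_add_distrib,
    Finset.sum_ite_eq' (Finset.univ.filter fun t => t < j) i (fun _ => c - d i)]
  simp [Finset.mem_filter]

lemma comm_pow_apply {𝔽 : Type*} [Field 𝔽] {N : Type*} [AddCommGroup N] [Module 𝔽 N]
    {D A : N →ₗ[𝔽] N} (h : D ∘ₗ A = A ∘ₗ D) :
    ∀ (t : ℕ) (v : N), D ((A ^ t) v) = (A ^ t) (D v) := by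
  have h' : ∀ v, D (A v) = A (D v) := by
    intro v
    have := LinearMap.ext_iff.mp h v
    simpa using this
  intro t
  induction t with
  | zero => intro v; simp
  | succ t ih =>
      intro v
      rw [pow_succ, Module.End.mul_apply, ih, h', ← Module.End.mul_apply, ← pow_succ]

lemma sum_pair_cancel {ι : Type*} [Fintype ι] [DecidableEq ι]
    {M : Type*} [AddCommGroup M] {R : Type*} [Field R] [Module R M]
    (f g : ι → ι → M) (T : ι → M) (c : R)
    (hdiag : ∀ i, f i i - c • g i i = T i)
    (hoff : ∀ i j, j ≠ i → f i j - c • g j i = 0) :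
    (∑ i, ∑ j, f i j) - c • (∑ i, ∑ j, g i j) = ∑ i, T i := by
  have hg : c • (∑ i, ∑ j, g i j) = ∑ i, ∑ j, c • g j i := by
    rw [Finset.sum_comm, Finset.smul_sum]
    exact Finset.sum_congr rfl fun i _ => Finset.smul_sum
  rw [hg, ← Finset.sum_sub_distrib]
  refine Finset.sum_congr rfl fun i _ => ?_
  rw [← Finset.sum_sub_distrib,
    Finset.sum_eq_single i (fun b _ hb => hoff i b hb)
      (fun h => absurd (Finset.mem_univ i) h),
    hdiag i]

/-- Proposition 3.1(1) for `QDer`: the quasiderivation algebra `QDer(N)` of a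
multiplicative `n`-Hom Lie superalgebra is a Hom-subalgebra of `(Ω, [·,·], α̃)`. -/
theorem qder_hom_subalgebra {𝔽 : Type*} [Field 𝔽] [CharZero 𝔽]
    {N : Type*} [AddCommGroup N] [Module 𝔽 N] {m : ℕ} (hm : 1 ≤ m)
    (gr : ZMod 2 → Submodule 𝔽 N) (br : MultilinearMap 𝔽 (fun _ : Fin (m + 1) => N) N)
    (α : N →ₗ[𝔽] N) (H : IsMNHLS gr br α)
    (k s : ℕ) (ξ η : ZMod 2) (D E : N →ₗ[𝔽] N)
    (hD : IsQDer gr br α k ξ D) (hE : IsQDer gr br α s η E) :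
    IsQDer gr br α (k + 1) ξ (α ∘ₗ D) ∧
      IsQDer gr br α (k + s) (ξ + η) (D ∘ₗ E - sgn 𝔽 (ξ * η) • (E ∘ₗ D)) := by
  obtain ⟨D', hDh, hDa, hD'h, hD'a, hDid⟩ := hD
  obtain ⟨E', hEh, hEa, hE'h, hE'a, hEid⟩ := hE
  have hpow : ∀ (t : ℕ) (g : ZMod 2) (v : N), v ∈ gr g → (α ^ t) v ∈ gr g := by
    intro t
    induction t with
    | zero => intro g v hv; simpa using hv
    | succ t ih =>
        intro g v hv
        rw [pow_succ, Module.End.mul_apply]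
        exact ih g (α v) (H.alpha_even g v hv)
  have hDc := comm_pow_apply hDa
  have hEc := comm_pow_apply hEa
  have hks : ∀ v : N, (α ^ k) ((α ^ s) v) = (α ^ (k + s)) v := by
    intro v; rw [pow_add, Module.End.mul_apply]
  have hsk : ∀ v : N, (α ^ s) ((α ^ k) v) = (α ^ (k + s)) v := by
    intro v; rw [Nat.add_comm, pow_add, Module.End.mul_apply]
  have hDα : ∀ v, D (α v) = α (D v) := by
    intro v; have := LinearMap.ext_iff.mp hDa v; simpa using this
  have hEα : ∀ v, E (α v) = α (E v) := by
    intro v; have := LinearMap.ext_iff.mp hEa v; simpa using this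
  have hD'α : ∀ v, D' (α v) = α (D' v) := by
    intro v; have := LinearMap.ext_iff.mp hD'a v; simpa using this
  have hE'α : ∀ v, E' (α v) = α (E' v) := by
    intro v; have := LinearMap.ext_iff.mp hE'a v; simpa using this
  constructor
  · -- α ∘ₗ D is an α^(k+1)-quasiderivation with witness α ∘ₗ D'
    refine ⟨α ∘ₗ D', ?_, ?_, ?_, ?_, ?_⟩
    · intro g v hv
      exact H.alpha_even _ _ (hDh g v hv)
    · rw [LinearMap.comp_assoc, hDa, ← LinearMap.comp_assoc]
    · intro g v hv
      exact H.alpha_even _ _ (hD'h g v hv)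
    · rw [LinearMap.comp_assoc, hD'a, ← LinearMap.comp_assoc]
    · intro d x hx
      have hstep : ∀ i : Fin (m + 1),
          Function.update (fun j => (α ^ (k + 1)) (x j)) i ((α ∘ₗ D) (x i)) =
            fun t => α (Function.update (fun j => (α ^ k) (x j)) i (D (x i)) t) := by
        intro i; funext t
        rcases eq_or_ne t i with h | h
        · subst h; simp
        · simp [Function.update_of_ne h, pow_succ', Module.End.mul_apply]
      calc (∑ i : Fin (m + 1), sgn 𝔽 (ξ * psum d i) •
              br (Function.update (fun j => (α ^ (k + 1)) (x j)) i ((α ∘ₗ D) (x i))))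
          = ∑ i : Fin (m + 1), sgn 𝔽 (ξ * psum d i) •
              α (br (Function.update (fun j => (α ^ k) (x j)) i (D (x i)))) := by
            refine Finset.sum_congr rfl fun i _ => ?_
            rw [hstep i, ← H.alpha_br]
        _ = α (∑ i : Fin (m + 1), sgn 𝔽 (ξ * psum d i) •
              br (Function.update (fun j => (α ^ k) (x j)) i (D (x i)))) := by
            rw [map_sum]
            simp only [map_smul]
        _ = (α ∘ₗ D') (br x) := by rw [hDid d x hx]; rfl
  · -- [D, E] is an α^(k+s)-quasiderivation with witness [D', E']
    refine ⟨D' ∘ₗ E' - sgn 𝔽 (ξ * η) • (E' ∘ₗ D'), ?_, ?_, ?_, ?_, ?_⟩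
    · intro g v hv
      have h1 : D (E v) ∈ gr (g + (ξ + η)) := by
        have := hDh (g + η) (E v) (hEh g v hv)
        rwa [show g + η + ξ = g + (ξ + η) by ring] at this
      have h2 : E (D v) ∈ gr (g + (ξ + η)) := by
        have := hEh (g + ξ) (D v) (hDh g v hv)
        rwa [show g + ξ + η = g + (ξ + η) by ring] at this
      simpa using Submodule.sub_mem _ h1 (Submodule.smul_mem _ _ h2)
    · ext v
      simp [hDα, hEα]
    · intro g v hv
      have h1 : D' (E' v) ∈ gr (g + (ξ + η)) := by
        have := hD'h (g + η) (E' v) (hE'h g v hv)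
        rwa [show g + η + ξ = g + (ξ + η) by ring] at this
      have h2 : E' (D' v) ∈ gr (g + (ξ + η)) := by
        have := hE'h (g + ξ) (D' v) (hD'h g v hv)
        rwa [show g + ξ + η = g + (ξ + η) by ring] at this
      simpa using Submodule.sub_mem _ h1 (Submodule.smul_mem _ _ h2)
    · ext v
      simp [hD'α, hE'α]
    · intro d x hx
      have hYmem : ∀ i : Fin (m + 1), ∀ j,
          Function.update (fun t => (α ^ s) (x t)) i (E (x i)) j ∈
            gr (Function.update d i (d i + η) j) := by
        intro i j
        rcases eq_or_ne j i with h | h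
        · subst h; rw [Function.update_self, Function.update_self]
          exact hEh (d j) (x j) (hx j)
        · rw [Function.update_of_ne h, Function.update_of_ne h]
          exact hpow s (d j) (x j) (hx j)
      have hZmem : ∀ i : Fin (m + 1), ∀ j,
          Function.update (fun t => (α ^ k) (x t)) i (D (x i)) j ∈
            gr (Function.update d i (d i + ξ) j) := by
        intro i j
        rcases eq_or_ne j i with h | h
        · subst h; rw [Function.update_self, Function.update_self]
          exact hDh (d j) (x j) (hx j)
        · rw [Function.update_of_ne h, Function.update_of_ne h]
          exact hpow k (d j) (x j) (hx j)
      have hargA : ∀ i : Fin (m + 1),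
          (fun j => (α ^ k) (Function.update (fun t => (α ^ s) (x t)) i (E (x i)) j)) =
            Function.update (fun t => (α ^ (k + s)) (x t)) i ((α ^ k) (E (x i))) := by
        intro i; funext t
        rcases eq_or_ne t i with h | h
        · subst h; simp
        · simp [Function.update_of_ne h, hks]
      have hargB : ∀ i : Fin (m + 1),
          (fun j => (α ^ s) (Function.update (fun t => (α ^ k) (x t)) i (D (x i)) j)) =
            Function.update (fun t => (α ^ (k + s)) (x t)) i ((α ^ s) (D (x i))) := by
        intro i; funext t
        rcases eq_or_ne t i with h | h
        · subst h; simp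
        · simp [Function.update_of_ne h, hsk]
      have e1 : D' (E' (br x)) = ∑ i : Fin (m + 1), ∑ j : Fin (m + 1),
          (sgn 𝔽 (η * psum d i) * sgn 𝔽 (ξ * (psum d j + if i < j then η else 0))) •
            br (Function.update
              (Function.update (fun t => (α ^ (k + s)) (x t)) i ((α ^ k) (E (x i)))) j
              (D (Function.update (fun t => (α ^ s) (x t)) i (E (x i)) j))) := by
        rw [← hEid d x hx, map_sum]
        refine Finset.sum_congr rfl fun i _ => ?_
        rw [map_smul, ← hDid (Function.update d i (d i + η)) _ (hYmem i), Finset.smul_sum]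
        refine Finset.sum_congr rfl fun j _ => ?_
        rw [smul_smul, hargA i, psum_update', add_sub_cancel_left]
      have e2 : E' (D' (br x)) = ∑ i : Fin (m + 1), ∑ j : Fin (m + 1),
          (sgn 𝔽 (ξ * psum d i) * sgn 𝔽 (η * (psum d j + if i < j then ξ else 0))) •
            br (Function.update
              (Function.update (fun t => (α ^ (k + s)) (x t)) i ((α ^ s) (D (x i)))) j
              (E (Function.update (fun t => (α ^ k) (x t)) i (D (x i)) j))) := by
        rw [← hDid d x hx, map_sum]
        refine Finset.sum_congr rfl fun i _ => ?_
        rw [map_smul, ← hEid (Function.update d i (d i + ξ)) _ (hZmem i), Finset.smul_sum]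
        refine Finset.sum_congr rfl fun j _ => ?_
        rw [smul_smul, hargB i, psum_update', add_sub_cancel_left]
      have hRHS : (D' ∘ₗ E' - sgn 𝔽 (ξ * η) • (E' ∘ₗ D')) (br x) =
          D' (E' (br x)) - sgn 𝔽 (ξ * η) • E' (D' (br x)) := by
        simp
      rw [hRHS, e1, e2]
      refine (sum_pair_cancel _ _ _ (sgn 𝔽 (ξ * η)) ?_ ?_).symm
      · -- diagonal terms
        intro i
        simp only [lt_irrefl, if_false, add_zero, Function.update_self,
          Function.update_idem]
        have happ : (D ∘ₗ E - sgn 𝔽 (ξ * η) • (E ∘ₗ D)) (x i) =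
            D (E (x i)) - sgn 𝔽 (ξ * η) • E (D (x i)) := by simp
        rw [happ, MultilinearMap.map_update_sub, MultilinearMap.map_update_smul,
          show (ξ + η) * psum d i = η * psum d i + ξ * psum d i by ring, sgn_add'']
        module
      · -- off-diagonal terms cancel
        intro i j h
        rw [sub_eq_zero]
        rw [Function.update_of_ne h, Function.update_of_ne (Ne.symm h)]
        rw [hDc s (x j), hEc k (x i), Function.update_comm (Ne.symm h), smul_smul]
        congr 1
        have hsq := sgn_sq 𝔽 (ξ * η)
        rcases h.lt_or_gt with hlt | hlt
        · -- j < i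
          rw [if_neg (asymm hlt), if_pos hlt, add_zero,
            show η * (psum d i + ξ) = η * psum d i + ξ * η by ring, sgn_add'']
          linear_combination (-(sgn 𝔽 (η * psum d i) * sgn 𝔽 (ξ * psum d j))) * hsq
        · -- i < j
          rw [if_pos hlt, if_neg (asymm hlt), add_zero,
            show ξ * (psum d j + η) = ξ * psum d j + ξ * η by ring, sgn_add'']
          ring
end
end

section
/- For a multiplicative n-Hom Lie superalgebra N, [QC(N), QC(N)] ⊆ QDer(N): if D is a homogeneous α^k-quasicentroid element of degree ξ and E a homogeneous α^s-quasicentroid element of degree η, then [D,E] = DE − (−1)^{ξη}ED is an α^{k+s}-quasiderivation of degree ξ+η; in fact Σ_{i=1}^{n}(−1)^{(ξ+η)|X_{i−1}|}[α^{k+s}(x₁),…,[D,E](xᵢ),…,α^{k+s}(xₙ)] = 0 for all homogeneous xᵢ, so the associated map may be taken to be 0. -/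
open scoped BigOperators

noncomputable section

variable {𝔽 : Type*} [Field 𝔽]
variable {N : Type*} [AddCommGroup N] [Module 𝔽 N]

-- aux (already tested)
lemma zmod2_cases : ∀ g : ZMod 2, g = 0 ∨ g = 1 := by decide
lemma zmod2_add_self : ∀ a : ZMod 2, a + a = 0 := by decide
lemma sgn_mul_sgn (a b : ZMod 2) : sgn 𝔽 a * sgn 𝔽 b = sgn 𝔽 (a + b) := by
  rcases zmod2_cases a with ha | ha <;> rcases zmod2_cases b with hb | hb <;>
    subst ha hb <;> simp [sgn, (by decide : (1:ZMod 2)+1 = 0)]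
lemma sgn_smul_sgn_smul {M : Type*} [AddCommGroup M] [Module 𝔽 M] (a b : ZMod 2) (v : M) :
    sgn 𝔽 a • sgn 𝔽 b • v = sgn 𝔽 (a + b) • v := by rw [smul_smul, sgn_mul_sgn]
lemma sgn_sq_smul {M : Type*} [AddCommGroup M] [Module 𝔽 M] (a : ZMod 2) (v : M) :
    sgn 𝔽 a • sgn 𝔽 a • v = v := by
  rw [sgn_smul_sgn_smul, zmod2_add_self]; simp [sgn]
lemma sgn_zero_eq_one : sgn 𝔽 (0 : ZMod 2) = 1 := by simp [sgn]
lemma zk1 : ∀ A B p : ZMod 2, (A + B) * p + A * p + B * (p + A) = A * B := by decide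
lemma zk2 : ∀ A B p : ZMod 2, (A + B) * p + A * B + B * p + A * (p + B) = 0 := by decide
lemma psum_zero {m : ℕ} (d : Fin (m+1) → ZMod 2) : psum d 0 = 0 := by
  unfold psum
  rw [Finset.filter_false_of_mem, Finset.sum_empty]
  intro j _; exact fun h => absurd h (by simp [Fin.lt_def])
lemma psum_update_not_lt {m : ℕ} (d : Fin m → ZMod 2) (t i : Fin m) (c : ZMod 2)
    (h : ¬ t < i) : psum (Function.update d t c) i = psum d i := by
  unfold psum
  refine Finset.sum_congr rfl fun j hj => ?_
  simp only [Finset.mem_filter] at hj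
  exact Function.update_of_ne (fun (he : j = t) => h (he ▸ hj.2)) _ _
lemma psum_update_lt {m : ℕ} (d : Fin m → ZMod 2) (t i : Fin m) (c : ZMod 2)
    (h : t < i) : psum (Function.update d t c) i = c + d t + psum d i := by
  unfold psum
  have ht : t ∈ Finset.univ.filter (fun j => j < i) := by simp [h]
  rw [Finset.sum_update_of_mem ht, ← Finset.add_sum_erase _ d ht,
    Finset.sdiff_singleton_eq_erase]
  have := zmod2_add_self (d t)
  ring_nf
  rw [(by decide : (2:ZMod 2) = 0)]
  ring
-- commuting / evenness helpers
lemma comm_pow {D α : N →ₗ[𝔽] N} (h : D ∘ₗ α = α ∘ₗ D) (t : ℕ) (x : N) :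
    D ((α ^ t) x) = (α ^ t) (D x) := by
  have hc : Commute D α := by
    rw [Commute, SemiconjBy, Module.End.mul_eq_comp, Module.End.mul_eq_comp, h]
  have h2 : D * α ^ t = α ^ t * D := (hc.pow_right t).eq
  have h3 := congrFun (congrArg DFunLike.coe h2) x
  simpa [Module.End.mul_apply] using h3
lemma pow_pow_apply (α : N →ₗ[𝔽] N) (k s : ℕ) (v : N) :
    (α ^ s) ((α ^ k) v) = (α ^ k) ((α ^ s) v) := by
  have h2 : α ^ s * α ^ k = α ^ k * α ^ s := by rw [← pow_add, ← pow_add, add_comm]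
  have h3 := congrFun (congrArg DFunLike.coe h2) v
  simpa [Module.End.mul_apply] using h3
lemma pow_even {gr : ZMod 2 → Submodule 𝔽 N} {α : N →ₗ[𝔽] N}
    (hα : ∀ g : ZMod 2, ∀ x ∈ gr g, α x ∈ gr g) (t : ℕ) (g : ZMod 2) {x : N}
    (hx : x ∈ gr g) : (α ^ t) x ∈ gr g := by
  induction t with
  | zero => simpa using hx
  | succ n ih => simpa [pow_succ', Module.End.mul_apply] using hα g _ ih

lemma qc_move {m : ℕ} (gr : ZMod 2 → Submodule 𝔽 N)
    (br : MultilinearMap 𝔽 (fun _ : Fin (m+1) => N) N) (α : N →ₗ[𝔽] N)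
    (hαe : ∀ g : ZMod 2, ∀ x ∈ gr g, α x ∈ gr g)
    (k s : ℕ) (ξ η : ZMod 2) (D E : N →ₗ[𝔽] N)
    (hD : IsQCent gr br α k ξ D) (hE : IsQCent gr br α s η E)
    (d : Fin (m+1) → ZMod 2) (x : Fin (m+1) → N) (hx : ∀ i, x i ∈ gr (d i))
    (i : Fin (m+1)) (hi : i ≠ 0) :
    br (Function.update (fun j => (α ^ k) ((α ^ s) (x j))) i (D (E (x i)))) =
      (sgn 𝔽 (ξ * psum d i) * sgn 𝔽 (η * (psum d i + ξ))) •
        br (Function.update (fun j => (α ^ k) ((α ^ s) (x j))) 0 (E (D (x 0)))) := by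
  set base : Fin (m+1) → N := fun j => (α ^ k) ((α ^ s) (x j)) with hbase
  -- step 1
  set y : Fin (m+1) → N := Function.update (fun j => (α ^ s) (x j)) i (E (x i)) with hy
  set d' : Fin (m+1) → ZMod 2 := Function.update d i (d i + η) with hd'
  have hym : ∀ j, y j ∈ gr (d' j) := by
    intro j
    rcases eq_or_ne j i with h | hj
    · rw [h]
      simpa [hy, hd'] using hE.1 (d i) (x i) (hx i)
    · simp only [hy, hd', Function.update_of_ne hj]
      exact pow_even hαe s (d j) (hx j)
  have h1 := hD.2.2 d' y hym i
  have hp1 : psum d' i = psum d i := psum_update_not_lt d i i _ (lt_irrefl i)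
  -- tuple identifications for step 1
  have e1 : (fun j => (α ^ k) (y j)) = Function.update base i ((α ^ k) (E (x i))) := by
    funext j
    rcases eq_or_ne j i with rfl | hj
    · simp [hy]
    · simp [hy, hbase, Function.update_of_ne hj]
  have e1R : Function.update (fun j => (α ^ k) (y j)) i (D (y i))
      = Function.update base i (D (E (x i))) := by
    rw [e1, Function.update_idem]
    simp [hy]
  have e1L : Function.update (fun j => (α ^ k) (y j)) 0 (D (y 0))
      = Function.update (Function.update base i ((α ^ k) (E (x i)))) 0
          ((α ^ s) (D (x 0))) := by
    rw [e1]
    have hy0 : y 0 = (α ^ s) (x 0) := Function.update_of_ne (Ne.symm hi) _ _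
    rw [hy0, comm_pow hD.2.1]
  rw [e1R, e1L, hp1] at h1
  -- step 2
  set z : Fin (m+1) → N := Function.update (fun j => (α ^ k) (x j)) 0 (D (x 0)) with hz
  set e : Fin (m+1) → ZMod 2 := Function.update d 0 (d 0 + ξ) with he
  have hzm : ∀ j, z j ∈ gr (e j) := by
    intro j
    rcases eq_or_ne j 0 with h | hj
    · rw [h]
      simpa [hz, he] using hD.1 (d 0) (x 0) (hx 0)
    · simp only [hz, he, Function.update_of_ne hj]
      exact pow_even hαe k (d j) (hx j)
  have h2 := hE.2.2 e z hzm i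
  have hp2 : psum e i = psum d i + ξ := by
    rw [he, psum_update_lt d 0 i (d 0 + ξ) (Fin.pos_iff_ne_zero.2 hi)]
    linear_combination zmod2_add_self (d 0)
  have e2 : (fun j => (α ^ s) (z j)) = Function.update base 0 ((α ^ s) (D (x 0))) := by
    funext j
    rcases eq_or_ne j 0 with rfl | hj
    · simp [hz]
    · simp [hz, hbase, Function.update_of_ne hj, pow_pow_apply]
  have e2L : Function.update (fun j => (α ^ s) (z j)) 0 (E (z 0))
      = Function.update base 0 (E (D (x 0))) := by
    rw [e2, Function.update_idem]
    simp [hz]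
  have e2R : Function.update (fun j => (α ^ s) (z j)) i (E (z i))
      = Function.update (Function.update base 0 ((α ^ s) (D (x 0)))) i
          ((α ^ k) (E (x i))) := by
    rw [e2]
    have hzi : z i = (α ^ k) (x i) := Function.update_of_ne hi _ _
    rw [hzi, comm_pow hE.2.1]
  rw [e2L, e2R, hp2] at h2
  have hA : Function.update (Function.update base i ((α ^ k) (E (x i)))) 0 ((α ^ s) (D (x 0)))
      = Function.update (Function.update base 0 ((α ^ s) (D (x 0)))) i ((α ^ k) (E (x i))) :=
    Function.update_comm hi _ _ _
  have hT : sgn 𝔽 (ξ * psum d i) •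
      br (Function.update (Function.update base i ((α ^ k) (E (x i)))) 0 ((α ^ s) (D (x 0))))
      = br (Function.update base i (D (E (x i)))) := by
    rw [h1, sgn_sq_smul]
  have hA' : sgn 𝔽 (η * (psum d i + ξ)) • br (Function.update base 0 (E (D (x 0))))
      = br (Function.update (Function.update base 0 ((α ^ s) (D (x 0)))) i
          ((α ^ k) (E (x i)))) := by
    rw [h2, sgn_sq_smul]
  rw [← hT, hA, ← hA', smul_smul]

set_option maxHeartbeats 1000000 in
lemma qc_zero_swap {m : ℕ} (hm : 2 ≤ m) (gr : ZMod 2 → Submodule 𝔽 N)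
    (br : MultilinearMap 𝔽 (fun _ : Fin (m+1) => N) N) (α : N →ₗ[𝔽] N)
    (hαe : ∀ g : ZMod 2, ∀ x ∈ gr g, α x ∈ gr g)
    (k s : ℕ) (ξ η : ZMod 2) (D E : N →ₗ[𝔽] N)
    (hD : IsQCent gr br α k ξ D) (hE : IsQCent gr br α s η E)
    (d : Fin (m+1) → ZMod 2) (x : Fin (m+1) → N) (hx : ∀ i, x i ∈ gr (d i)) :
    br (Function.update (fun j => (α ^ k) ((α ^ s) (x j))) 0 (D (E (x 0)))) =
      sgn 𝔽 (ξ * η) •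
        br (Function.update (fun j => (α ^ k) ((α ^ s) (x j))) 0 (E (D (x 0)))) := by
  set base : Fin (m+1) → N := fun j => (α ^ k) ((α ^ s) (x j)) with hbase
  set i1 : Fin (m+1) := ⟨1, by omega⟩ with hi1
  set i2 : Fin (m+1) := ⟨2, by omega⟩ with hi2
  have h10 : i1 ≠ 0 := by simp [hi1, Fin.ext_iff]
  have h20 : i2 ≠ 0 := by simp [hi2, Fin.ext_iff]
  have h21 : i2 ≠ i1 := by simp [hi1, hi2, Fin.ext_iff]
  have h01lt : (0 : Fin (m+1)) < i1 := by simp [hi1, Fin.lt_def]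
  have h02lt : (0 : Fin (m+1)) < i2 := by simp [hi2, Fin.lt_def]
  have h12lt : i1 < i2 := by simp [hi1, hi2, Fin.lt_def]
  have h21nlt : ¬ i2 < i1 := by simp [hi1, hi2, Fin.lt_def]
  -- Step A
  set y : Fin (m+1) → N := Function.update (fun j => (α ^ s) (x j)) 0 (E (x 0)) with hy
  set d' : Fin (m+1) → ZMod 2 := Function.update d 0 (d 0 + η) with hd'
  have hym : ∀ j, y j ∈ gr (d' j) := by
    intro j
    rcases eq_or_ne j 0 with h | hj
    · rw [h]
      simpa [hy, hd'] using hE.1 (d 0) (x 0) (hx 0)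
    · simp only [hy, hd', Function.update_of_ne hj]
      exact pow_even hαe s (d j) (hx j)
  have hA := hD.2.2 d' y hym i1
  have eA : (fun j => (α ^ k) (y j)) = Function.update base 0 ((α ^ k) (E (x 0))) := by
    funext j
    rcases eq_or_ne j 0 with h | hj
    · rw [h]; simp [hy]
    · simp [hy, hbase, Function.update_of_ne hj]
  have eAL : Function.update (fun j => (α ^ k) (y j)) 0 (D (y 0))
      = Function.update base 0 (D (E (x 0))) := by
    rw [eA, Function.update_idem]
    simp [hy]
  have eAR : Function.update (fun j => (α ^ k) (y j)) i1 (D (y i1))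
      = Function.update (Function.update base 0 ((α ^ k) (E (x 0)))) i1
          ((α ^ s) (D (x i1))) := by
    rw [eA]
    have : y i1 = (α ^ s) (x i1) := Function.update_of_ne h10 _ _
    rw [this, comm_pow hD.2.1]
  rw [eAL, eAR] at hA
  -- Step B
  set z : Fin (m+1) → N := Function.update (fun j => (α ^ k) (x j)) i1 (D (x i1)) with hz
  set e : Fin (m+1) → ZMod 2 := Function.update d i1 (d i1 + ξ) with he
  have hzm : ∀ j, z j ∈ gr (e j) := by
    intro j
    rcases eq_or_ne j i1 with h | hj
    · rw [h]
      simpa [hz, he] using hD.1 (d i1) (x i1) (hx i1)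
    · simp only [hz, he, Function.update_of_ne hj]
      exact pow_even hαe k (d j) (hx j)
  have hB := hE.2.2 e z hzm i2
  have eB : (fun j => (α ^ s) (z j)) = Function.update base i1 ((α ^ s) (D (x i1))) := by
    funext j
    rcases eq_or_ne j i1 with h | hj
    · rw [h]; simp [hz]
    · simp [hz, hbase, Function.update_of_ne hj, pow_pow_apply]
  have eBL : Function.update (fun j => (α ^ s) (z j)) 0 (E (z 0))
      = Function.update (Function.update base 0 ((α ^ k) (E (x 0)))) i1
          ((α ^ s) (D (x i1))) := by
    rw [eB]
    have : z 0 = (α ^ k) (x 0) := Function.update_of_ne (Ne.symm h10) _ _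
    rw [this, comm_pow hE.2.1, Function.update_comm h10]
  have eBR : Function.update (fun j => (α ^ s) (z j)) i2 (E (z i2))
      = Function.update (Function.update base i1 ((α ^ s) (D (x i1)))) i2
          ((α ^ k) (E (x i2))) := by
    rw [eB]
    have : z i2 = (α ^ k) (x i2) := Function.update_of_ne h21 _ _
    rw [this, comm_pow hE.2.1]
  rw [eBL, eBR] at hB
  -- Step C
  set y' : Fin (m+1) → N := Function.update (fun j => (α ^ s) (x j)) i2 (E (x i2)) with hy'
  set d'' : Fin (m+1) → ZMod 2 := Function.update d i2 (d i2 + η) with hd''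
  have hy'm : ∀ j, y' j ∈ gr (d'' j) := by
    intro j
    rcases eq_or_ne j i2 with h | hj
    · rw [h]
      simpa [hy', hd''] using hE.1 (d i2) (x i2) (hx i2)
    · simp only [hy', hd'', Function.update_of_ne hj]
      exact pow_even hαe s (d j) (hx j)
  have hC := hD.2.2 d'' y' hy'm i1
  have eC : (fun j => (α ^ k) (y' j)) = Function.update base i2 ((α ^ k) (E (x i2))) := by
    funext j
    rcases eq_or_ne j i2 with h | hj
    · rw [h]; simp [hy']
    · simp [hy', hbase, Function.update_of_ne hj]
  have eCL : Function.update (fun j => (α ^ k) (y' j)) 0 (D (y' 0))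
      = Function.update (Function.update base i2 ((α ^ k) (E (x i2)))) 0
          ((α ^ s) (D (x 0))) := by
    rw [eC]
    have : y' 0 = (α ^ s) (x 0) := Function.update_of_ne (Ne.symm h20) _ _
    rw [this, comm_pow hD.2.1]
  have eCR : Function.update (fun j => (α ^ k) (y' j)) i1 (D (y' i1))
      = Function.update (Function.update base i1 ((α ^ s) (D (x i1)))) i2
          ((α ^ k) (E (x i2))) := by
    rw [eC]
    have : y' i1 = (α ^ s) (x i1) := Function.update_of_ne (Ne.symm h21) _ _
    rw [this, comm_pow hD.2.1, Function.update_comm (Ne.symm h21)]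
  rw [eCL, eCR] at hC
  -- Step D
  set z' : Fin (m+1) → N := Function.update (fun j => (α ^ k) (x j)) 0 (D (x 0)) with hz'
  set e' : Fin (m+1) → ZMod 2 := Function.update d 0 (d 0 + ξ) with he'
  have hz'm : ∀ j, z' j ∈ gr (e' j) := by
    intro j
    rcases eq_or_ne j 0 with h | hj
    · rw [h]
      simpa [hz', he'] using hD.1 (d 0) (x 0) (hx 0)
    · simp only [hz', he', Function.update_of_ne hj]
      exact pow_even hαe k (d j) (hx j)
  have hDs := hE.2.2 e' z' hz'm i2
  have eD : (fun j => (α ^ s) (z' j)) = Function.update base 0 ((α ^ s) (D (x 0))) := by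
    funext j
    rcases eq_or_ne j 0 with h | hj
    · rw [h]; simp [hz']
    · simp [hz', hbase, Function.update_of_ne hj, pow_pow_apply]
  have eDL : Function.update (fun j => (α ^ s) (z' j)) 0 (E (z' 0))
      = Function.update base 0 (E (D (x 0))) := by
    rw [eD, Function.update_idem]
    simp [hz']
  have eDR : Function.update (fun j => (α ^ s) (z' j)) i2 (E (z' i2))
      = Function.update (Function.update base i2 ((α ^ k) (E (x i2)))) 0
          ((α ^ s) (D (x 0))) := by
    rw [eD]
    have : z' i2 = (α ^ k) (x i2) := Function.update_of_ne h20 _ _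
    rw [this, comm_pow hE.2.1, Function.update_comm h20]
  rw [eDL, eDR] at hDs
  -- psum values
  have hpA : psum d' i1 = (d 0 + η) + d 0 + psum d i1 := psum_update_lt d 0 i1 _ h01lt
  have hpB : psum e i2 = (d i1 + ξ) + d i1 + psum d i2 := psum_update_lt d i1 i2 _ h12lt
  have hpC : psum d'' i1 = psum d i1 := psum_update_not_lt d i2 i1 _ h21nlt
  have hpD : psum e' i2 = (d 0 + ξ) + d 0 + psum d i2 := psum_update_lt d 0 i2 _ h02lt
  rw [hpA] at hA; rw [hpB] at hB; rw [hpC] at hC; rw [hpD] at hDs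
  -- combine
  have hCrev : br (Function.update (Function.update base i1 ((α ^ s) (D (x i1)))) i2
      ((α ^ k) (E (x i2)))) = sgn 𝔽 (ξ * psum d i1) •
      br (Function.update (Function.update base i2 ((α ^ k) (E (x i2)))) 0
        ((α ^ s) (D (x 0)))) := by
    rw [hC, sgn_sq_smul]
  have hFrev : br (Function.update (Function.update base i2 ((α ^ k) (E (x i2)))) 0
      ((α ^ s) (D (x 0)))) = sgn 𝔽 (η * ((d 0 + ξ) + d 0 + psum d i2)) •
      br (Function.update base 0 (E (D (x 0)))) := by
    rw [hDs, sgn_sq_smul]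
  rw [hA, hB, hCrev, hFrev, sgn_smul_sgn_smul, sgn_smul_sgn_smul, sgn_smul_sgn_smul]
  congr 2
  generalize hg1 : ξ = A
  generalize hg2 : η = B
  clear hg1 hg2
  generalize d 0 = c
  generalize d i1 = e
  generalize psum d i1 = p
  generalize psum d i2 = q
  revert A B c e p q
  decide

/-- Proposition 3.2(5): `[QC(N), QC(N)] ⊆ QDer(N)`: the supercommutator of two
homogeneous quasicentroid elements is a quasiderivation; in fact
`Σᵢ (-1)^{(ξ+η)|X_{i-1}|} [α^{k+s}(x₁), …, [D,E](xᵢ), …, α^{k+s}(xₙ)] = 0`, so the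
associated map may be taken to be `0`. -/

theorem qcent_bracket_qcent_qder {𝔽 : Type*} [Field 𝔽] [CharZero 𝔽]
    {N : Type*} [AddCommGroup N] [Module 𝔽 N] {m : ℕ} (hm : 1 ≤ m)
    (gr : ZMod 2 → Submodule 𝔽 N) (br : MultilinearMap 𝔽 (fun _ : Fin (m + 1) => N) N)
    (α : N →ₗ[𝔽] N) (H : IsMNHLS gr br α)
    (k s : ℕ) (ξ η : ZMod 2) (D E : N →ₗ[𝔽] N)
    (hD : IsQCent gr br α k ξ D) (hE : IsQCent gr br α s η E) :
    (∀ (d : Fin (m + 1) → ZMod 2) (x : Fin (m + 1) → N), (∀ i, x i ∈ gr (d i)) →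
      (∑ i : Fin (m + 1), sgn 𝔽 ((ξ + η) * psum d i) •
        br (Function.update (fun j => (α ^ (k + s)) (x j)) i
          ((D ∘ₗ E - sgn 𝔽 (ξ * η) • (E ∘ₗ D)) (x i)))) = 0) ∧
    IsQDerWith gr br α (k + s) (ξ + η) (D ∘ₗ E - sgn 𝔽 (ξ * η) • (E ∘ₗ D)) 0 := by
  have hαe := H.alpha_even
  have main : ∀ (d : Fin (m + 1) → ZMod 2) (x : Fin (m + 1) → N), (∀ i, x i ∈ gr (d i)) →
      (∑ i : Fin (m + 1), sgn 𝔽 ((ξ + η) * psum d i) •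
        br (Function.update (fun j => (α ^ (k + s)) (x j)) i
          ((D ∘ₗ E - sgn 𝔽 (ξ * η) • (E ∘ₗ D)) (x i)))) = 0 := by
    intro d x hx
    have hks : (fun j => (α ^ (k + s)) (x j)) = (fun j => (α ^ k) ((α ^ s) (x j))) := by
      funext j
      rw [pow_add]
      rfl
    have happ : ∀ i, (D ∘ₗ E - sgn 𝔽 (ξ * η) • (E ∘ₗ D)) (x i)
        = D (E (x i)) - sgn 𝔽 (ξ * η) • E (D (x i)) := by
      intro i
      simp [LinearMap.sub_apply, LinearMap.smul_apply, LinearMap.comp_apply]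
    have hterm : ∀ i : Fin (m + 1), i ≠ 0 →
        sgn 𝔽 ((ξ + η) * psum d i) •
          br (Function.update (fun j => (α ^ k) ((α ^ s) (x j))) i
            ((D ∘ₗ E - sgn 𝔽 (ξ * η) • (E ∘ₗ D)) (x i)))
        = sgn 𝔽 (ξ * η) •
            br (Function.update (fun j => (α ^ k) ((α ^ s) (x j))) 0 (E (D (x 0))))
          - br (Function.update (fun j => (α ^ k) ((α ^ s) (x j))) 0 (D (E (x 0)))) := by
      intro i hi
      rw [happ i, MultilinearMap.map_update_sub, MultilinearMap.map_update_smul]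
      rw [qc_move gr br α hαe k s ξ η D E hD hE d x hx i hi]
      have hswap : br (Function.update (fun j => (α ^ k) ((α ^ s) (x j))) i (E (D (x i))))
          = (sgn 𝔽 (η * psum d i) * sgn 𝔽 (ξ * (psum d i + η))) •
            br (Function.update (fun j => (α ^ k) ((α ^ s) (x j))) 0 (D (E (x 0)))) := by
        have hb2 : (fun j => (α ^ s) ((α ^ k) (x j))) = (fun j => (α ^ k) ((α ^ s) (x j))) := by
          funext j
          exact pow_pow_apply α k s (x j)
        have h2 := qc_move gr br α hαe s k η ξ E D hE hD d x hx i hi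
        rwa [hb2] at h2
      rw [hswap]
      rw [smul_sub, ← smul_smul, ← smul_smul, sgn_smul_sgn_smul, sgn_smul_sgn_smul,
        sgn_smul_sgn_smul, sgn_smul_sgn_smul, sgn_smul_sgn_smul]
      rw [zk1 ξ η (psum d i), zk2 ξ η (psum d i), sgn_zero_eq_one, one_smul]
    simp only [hks]
    rw [Fin.sum_univ_succ]
    have hterm0 : sgn 𝔽 ((ξ + η) * psum d 0) •
        br (Function.update (fun j => (α ^ k) ((α ^ s) (x j))) 0
          ((D ∘ₗ E - sgn 𝔽 (ξ * η) • (E ∘ₗ D)) (x 0)))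
        = br (Function.update (fun j => (α ^ k) ((α ^ s) (x j))) 0 (D (E (x 0))))
          - sgn 𝔽 (ξ * η) •
            br (Function.update (fun j => (α ^ k) ((α ^ s) (x j))) 0 (E (D (x 0)))) := by
      rw [psum_zero, mul_zero, sgn_zero_eq_one, one_smul, happ 0,
        MultilinearMap.map_update_sub, MultilinearMap.map_update_smul]
    rw [hterm0, Finset.sum_congr rfl (fun i _ => hterm i.succ (Fin.succ_ne_zero i)),
      Finset.sum_const, Finset.card_univ, Fintype.card_fin]
    by_cases hm2 : 2 ≤ m
    · rw [show br (Function.update (fun j => (α ^ k) ((α ^ s) (x j))) 0 (D (E (x 0))))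
          = sgn 𝔽 (ξ * η) •
            br (Function.update (fun j => (α ^ k) ((α ^ s) (x j))) 0 (E (D (x 0)))) from
        qc_zero_swap hm2 gr br α hαe k s ξ η D E hD hE d x hx]
      simp
    · have hm1 : m = 1 := by omega
      subst hm1
      rw [one_nsmul]
      abel
  refine ⟨main, ?_, ?_, ?_, ?_, ?_⟩
  · -- Homog
    intro g v hv
    have h1 : D (E v) ∈ gr (g + (ξ + η)) := by
      rw [show g + (ξ + η) = g + η + ξ by ring]
      exact hD.1 (g + η) (E v) (hE.1 g v hv)
    have h2 : E (D v) ∈ gr (g + (ξ + η)) := by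
      rw [show g + (ξ + η) = g + ξ + η by ring]
      exact hE.1 (g + ξ) (D v) (hD.1 g v hv)
    simpa [LinearMap.sub_apply, LinearMap.smul_apply, LinearMap.comp_apply] using
      sub_mem h1 (Submodule.smul_mem _ _ h2)
  · -- commutes with α
    have hDα : ∀ w, D (α w) = α (D w) := fun w => by
      have h := congrFun (congrArg DFunLike.coe hD.2.1) w
      simpa using h
    have hEα : ∀ w, E (α w) = α (E w) := fun w => by
      have h := congrFun (congrArg DFunLike.coe hE.2.1) w
      simpa using h
    apply LinearMap.ext
    intro v
    simp only [LinearMap.comp_apply, LinearMap.sub_apply, LinearMap.smul_apply,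
      map_sub, map_smul]
    rw [hEα v, hDα (E v), hDα v, hEα (D v)]
  · intro g v hv
    simp only [LinearMap.zero_apply]
    exact (gr (g + (ξ + η))).zero_mem
  · rw [LinearMap.comp_zero, LinearMap.zero_comp]
  · intro d x hx
    rw [main d x hx]
    simp
end
end
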